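/- Let w be a consistent (negative-cycle-free) weight function on G, and suppose the weight of edge e = (u,v) is changed to a new value c, yielding w'. Then w' admits a negative cycle if and only if c + d_vu < 0, where d_vu is the weight of a shortest v-to-u path with respect to w. -/

import Mathlib

/-!
Away from the edge `(u, v)` the weights `w'` and `w` agree, so a negative `w'`-cycle must pass
through `(u, v)`; cutting it there leaves a `v`-to-`u` walk `q` with `c + w'(q) < 0`. If `q` uses
`(u, v)` again, splitting it there writes `c + w'(q)` as the sum of the same quantity for two
shorter `v`-to-`u` walks, so induction on the length yields a walk avoiding `(u, v)`, whose `w'`-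
and `w`-weights coincide. Conversely, consistency of `w` on the cycles formed by `(u, v)` and a
`v`-to-`u` path forces `c < w(u, v)` once `c + d_vu < 0`, so `w' ≤ w` and closing a short
`v`-to-`u` path by `(u, v)` gives a negative `w'`-cycle.
-/

/-- Weight of a path given as a list of vertices: sum of weights of consecutive pairs. -/
def pathWeight {V : Type*} (w : V → V → ℝ) (l : List V) : ℝ :=
  ((l.zip l.tail).map fun p => w p.1 p.2).sum

/-- `l` is a directed path (walk) from `u` to `v` in the graph with edge relation `E`. -/
def IsUVPath {V : Type*} (E : V → V → Prop) (u v : V) (l : List V) : Prop :=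
  l ≠ [] ∧ l.Chain' E ∧ l.head? = some u ∧ l.getLast? = some v

/-- `l` is a directed cycle (closed walk): consecutive pairs are edges and it starts
and ends at the same vertex, traversing at least one edge. -/
def IsCycle {V : Type*} (E : V → V → Prop) (l : List V) : Prop :=
  2 ≤ l.length ∧ l.Chain' E ∧ l.head? = l.getLast?

/-- `w` is consistent with the graph `E`: no directed cycle has negative total weight. -/
def Consistent {V : Type*} (E : V → V → Prop) (w : V → V → ℝ) : Prop :=
  ∀ l, IsCycle E l → 0 ≤ pathWeight w l

open List

theorem EReal.coe_add_sInf_lt_zero_iff {ι : Type*} (P : ι → Prop) (f : ι → ℝ) (c : ℝ) :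
    (c : EReal) + sInf {r : EReal | ∃ i, P i ∧ (f i : EReal) = r} < 0 ↔
      ∃ i, P i ∧ c + f i < 0 := by
  rw [add_comm, ← EReal.lt_sub_iff_add_lt (by simp) (by simp), zero_sub, ← EReal.coe_neg,
    sInf_lt_iff]
  constructor
  · rintro ⟨_, ⟨i, hi, rfl⟩, hlt⟩
    exact ⟨i, hi, by linarith [EReal.coe_lt_coe_iff.mp hlt]⟩
  · rintro ⟨i, hi, hlt⟩
    exact ⟨f i, ⟨i, hi, rfl⟩, EReal.coe_lt_coe_iff.mpr (by linarith)⟩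

section PathWeight

variable {V : Type*} (w : V → V → ℝ)

theorem pathWeight_cons_cons (a b : V) (t : List V) :
    pathWeight w (a :: b :: t) = w a b + pathWeight w (b :: t) := by
  simp [pathWeight]

theorem pathWeight_cons_of_head? {a b : V} {l : List V} (h : l.head? = some b) :
    pathWeight w (a :: l) = w a b + pathWeight w l := by
  obtain ⟨t, rfl⟩ : ∃ t, l = b :: t := by
    cases l with
    | nil => simp at h
    | cons x t => exact ⟨t, by simpa using h⟩
  exact pathWeight_cons_cons w a b t

theorem pathWeight_append_cons (A : List V) (x : V) (B : List V) :
    pathWeight w (A ++ x :: B) = pathWeight w (A ++ [x]) + pathWeight w (x :: B) := by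
  induction A using List.twoStepInduction with
  | nil => simp [pathWeight]
  | singleton a => simp [pathWeight]
  | cons_cons a b A _ ih =>
    simp only [cons_append, pathWeight_cons_cons] at ih ⊢
    rw [ih]
    ring

theorem pathWeight_append_of_getLast? {A : List V} {x : V} (h : A.getLast? = some x)
    (B : List V) : pathWeight w (A ++ B) = pathWeight w A + pathWeight w (x :: B) := by
  obtain ⟨A', rfl⟩ := getLast?_eq_some_iff.mp h
  rw [append_assoc, singleton_append, pathWeight_append_cons]

theorem pathWeight_mono {w' : V → V → ℝ} (h : ∀ a b, w' a b ≤ w a b) (l : List V) :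
    pathWeight w' l ≤ pathWeight w l :=
  List.sum_le_sum fun p _ => h p.1 p.2

end PathWeight

section Paths

variable {V : Type*} {E : V → V → Prop}

theorem IsCycle.isUVPath {l : List V} {x : V} (hl : IsCycle E l) (hx : l.head? = some x) :
    IsUVPath E x x l :=
  ⟨ne_nil_of_length_pos (by linarith [hl.1]), hl.2.1, hx, hl.2.2 ▸ hx⟩

theorem IsUVPath.isCycle_cons {u v : V} {p : List V} (hp : IsUVPath E v u p) (he : E u v) :
    IsCycle E (u :: p) := by
  obtain ⟨hne, hch, hhd, hlast⟩ := hp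
  obtain ⟨y, t, rfl⟩ := ne_nil_iff_exists_cons.mp hne
  obtain rfl : y = v := by simpa using hhd
  exact ⟨by simp, IsChain.cons_cons he hch, by simp [getLast?_cons, hlast]⟩

theorem IsUVPath.split {a b x : V} {C D : List V} (h : IsUVPath E a b (C ++ x :: D)) :
    IsUVPath E a x (C ++ [x]) ∧ IsUVPath E x b (x :: D) := by
  obtain ⟨-, hch, hhd, hlast⟩ := h
  obtain ⟨hchC, hchD⟩ := isChain_split.mp hch
  refine ⟨⟨by simp, hchC, ?_, by simp⟩, ⟨by simp, hchD, rfl, ?_⟩⟩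
  · simpa [head?_append] using hhd
  · rwa [getLast?_append_of_ne_nil _ (cons_ne_nil x D)] at hlast

theorem IsUVPath.split_edge {a b u v : V} {C D : List V}
    (h : IsUVPath E a b (C ++ u :: v :: D)) :
    IsUVPath E a u (C ++ [u]) ∧ IsUVPath E v b (v :: D) := by
  refine ⟨h.split.1, ?_⟩
  rw [show C ++ u :: v :: D = (C ++ [u]) ++ v :: D by simp] at h
  exact h.split.2

theorem IsUVPath.append {a b c : V} {P Q : List V} (hP : IsUVPath E a b P)
    (hQ : IsUVPath E b c Q) : IsUVPath E a c (P ++ Q.tail) := by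
  obtain ⟨-, hPch, hPhd, hPlast⟩ := hP
  obtain ⟨hQne, hQch, hQhd, hQlast⟩ := hQ
  obtain ⟨Q', rfl⟩ : ∃ Q', Q = b :: Q' := by
    obtain ⟨y, Q', rfl⟩ := ne_nil_iff_exists_cons.mp hQne
    exact ⟨Q', by simpa using hQhd⟩
  obtain ⟨P', rfl⟩ := getLast?_eq_some_iff.mp hPlast
  refine ⟨by simp, ?_, by simpa [head?_append] using hPhd, ?_⟩
  · exact IsChain.append_overlap (l₂ := [b]) hPch hQch (cons_ne_nil b [])
  · simpa [getLast?_cons, getLast?_append] using hQlast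

theorem IsCycle.exists_isUVPath_of_infix {u v : V} {l : List V}
    (hl : IsCycle E l) (huv : [u, v] <:+: l) :
    ∃ p, IsUVPath E v u p ∧
      ∀ w : V → V → ℝ, pathWeight w l = w u v + pathWeight w p := by
  obtain ⟨C, D, rfl⟩ := huv
  obtain ⟨x, hx⟩ : ∃ x, (C ++ [u, v] ++ D).head? = some x := by
    cases C <;> simp
  simp only [append_assoc, cons_append, nil_append] at hl hx ⊢
  obtain ⟨hCu, hvD⟩ := (hl.isUVPath hx).split_edge
  refine ⟨(v :: D) ++ (C ++ [u]).tail, hvD.append hCu, fun w => ?_⟩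
  rw [pathWeight_append_cons, pathWeight_cons_cons, pathWeight_append_of_getLast? w hvD.2.2.2,
    cons_head?_tail hCu.2.2.1]
  ring

end Paths

section UpdateEdge

variable {V : Type*} [DecidableEq V] {E : V → V → Prop} {w w' : V → V → ℝ} {u v : V}
  {c : ℝ}
  (hw' : ∀ a b, w' a b = if a = u ∧ b = v then c else w a b)
include hw'

theorem pathWeight_update_of_not_infix {l : List V} (huv : ¬[u, v] <:+: l) :
    pathWeight w' l = pathWeight w l := by
  induction l with
  | nil => rfl
  | cons a t ih =>
    cases t with
    | nil => rfl
    | cons b t =>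
      have hab : ¬(a = u ∧ b = v) := by
        rintro ⟨rfl, rfl⟩
        exact huv ⟨[], t, rfl⟩
      rw [pathWeight_cons_cons, pathWeight_cons_cons, hw', if_neg hab,
        ih fun h => huv (infix_cons h)]

theorem pathWeight_update_le (hc : c ≤ w u v) (l : List V) :
    pathWeight w' l ≤ pathWeight w l := by
  refine pathWeight_mono w (fun a b => ?_) l
  rw [hw']
  split_ifs with hab
  · obtain ⟨rfl, rfl⟩ := hab
    exact hc
  · exact le_rfl

theorem exists_isUVPath_add_pathWeight_neg_of_update {p : List V} (hp : IsUVPath E v u p)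
    (hneg : c + pathWeight w' p < 0) : ∃ q, IsUVPath E v u q ∧ c + pathWeight w q < 0 := by
  induction hn : p.length using Nat.strong_induction_on generalizing p with
  | _ n ih =>
    by_cases huv : [u, v] <:+: p
    · obtain ⟨C, D, rfl⟩ := huv
      simp only [append_assoc, cons_append, nil_append] at hp hneg hn
      obtain ⟨hCu, hvD⟩ := hp.split_edge
      rw [pathWeight_append_cons, pathWeight_cons_cons, hw', if_pos ⟨rfl, rfl⟩] at hneg
      by_cases hC : c + pathWeight w' (C ++ [u]) < 0
      · exact ih _ (by simp [← hn]) hCu hC rfl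
      · exact ih _ (by simp [← hn]; omega) hvD (by linarith) rfl
    · exact ⟨p, hp, pathWeight_update_of_not_infix hw' huv ▸ hneg⟩

end UpdateEdge

/-- Changing the weight of edge `(u,v)` to `c` creates a negative cycle iff
`c + d_vu < 0`, where `d_vu` is the shortest `v`-to-`u` distance w.r.t. `w`
(`+∞` in `EReal` if `u` is unreachable from `v`). -/
theorem stmt4 {V : Type*} [DecidableEq V] (E : V → V → Prop) (w : V → V → ℝ)
    (hcons : Consistent E w) (u v : V) (he : E u v) (c : ℝ)
    (w' : V → V → ℝ)
    (hw' : ∀ a b, w' a b = if a = u ∧ b = v then c else w a b)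
    (d : EReal)
    (hd : d = sInf {r : EReal | ∃ l, IsUVPath E v u l ∧ ((pathWeight w l : ℝ) : EReal) = r}) :
    (∃ l, IsCycle E l ∧ pathWeight w' l < 0) ↔ (c : EReal) + d < 0 := by
  have hw'uv : w' u v = c := by rw [hw', if_pos ⟨rfl, rfl⟩]
  rw [hd, EReal.coe_add_sInf_lt_zero_iff]
  constructor
  · rintro ⟨l, hl, hneg⟩
    by_cases huv : [u, v] <:+: l
    · obtain ⟨p, hp, hweight⟩ := hl.exists_isUVPath_of_infix huv
      rw [hweight, hw'uv] at hneg
      exact exists_isUVPath_add_pathWeight_neg_of_update hw' hp hneg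
    · rw [pathWeight_update_of_not_infix hw' huv] at hneg
      exact absurd (hcons l hl) hneg.not_ge
  · rintro ⟨p, hp, hneg⟩
    have hweight (ω : V → V → ℝ) := pathWeight_cons_of_head? ω (a := u) hp.2.2.1
    have hc : c ≤ w u v := by
      linarith [hweight w ▸ hcons _ (hp.isCycle_cons he)]
    refine ⟨u :: p, hp.isCycle_cons he, ?_⟩
    linarith [hweight w', pathWeight_update_le hw' hc p]
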